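/- (Comparison of Jensen functionals for uniformly convex-type functions) Let f be continuously differentiable on [a,b) with f' Φ'-superadditive, where Φ : [0,b-a] → ℝ≥0 is continuously differentiable, Φ' ≥ 0, Φ(0) = 0. Let x₁ ≤ ... ≤ xₙ in [a,b), and p, q with ∑pᵢ = ∑qᵢ = 1, partial sums of p in [0,1], partial sums of q in (0,1) for i < n, p ≠ q. With m* = min_i{mᵢ, m̄ᵢ} and M* = max_i{mᵢ, m̄ᵢ} for mᵢ = (∑_{j≤i}pⱼ)/(∑_{j≤i}qⱼ), m̄ᵢ = (∑_{j≥i}pⱼ)/(∑_{j≥i}qⱼ): Jₙ(f,x,p) - m* Jₙ(f,x,q) ≥ m* Φ(|∑(qᵢ-pᵢ)xᵢ|) + ∑(pᵢ - m*qᵢ) Φ(|xᵢ - ∑pⱼxⱼ|), and Jₙ(f,x,p) - M* Jₙ(f,x,q) ≤ -∑(M*qᵢ - pᵢ) Φ(|xᵢ - ∑qⱼxⱼ|) - Φ(|∑(pᵢ-qᵢ)xᵢ|). -/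

import Mathlib

open Finset

lemma mono_of_deriv_nonpos (g g' : ℝ → ℝ) (s t : ℝ) (hst : s ≤ t)
    (hg : ∀ u ∈ Set.Icc s t, HasDerivAt g (g' u) u)
    (hg' : ∀ u ∈ Set.Icc s t, g' u ≤ 0) : g t ≤ g s := by
  rcases eq_or_lt_of_le hst with h | h
  · rw [h]
  · obtain ⟨c, hc, hceq⟩ := exists_hasDerivAt_eq_slope g g' h
      (fun u hu => (hg u hu).continuousAt.continuousWithinAt)
      (fun u hu => hg u (Set.mem_Icc_of_Ioo hu))
    have h1 : g' c ≤ 0 := hg' c (Set.mem_Icc_of_Ioo hc)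
    have h2 : (g t - g s) / (t - s) ≤ 0 := hceq ▸ h1
    have h3 : 0 < t - s := sub_pos.mpr h
    have := (div_nonpos_iff.mp h2)
    rcases this with ⟨h4, h5⟩ | ⟨h4, h5⟩
    · linarith
    · linarith

lemma mono_of_deriv_nonneg (g g' : ℝ → ℝ) (s t : ℝ) (hst : s ≤ t)
    (hg : ∀ u ∈ Set.Icc s t, HasDerivAt g (g' u) u)
    (hg' : ∀ u ∈ Set.Icc s t, 0 ≤ g' u) : g s ≤ g t := by
  have h := mono_of_deriv_nonpos (fun u => -g u) (fun u => -g' u) s t hst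
    (fun u hu => (hg u hu).neg) (fun u hu => neg_nonpos.mpr (hg' u hu))
  simp only [neg_le_neg_iff] at h
  exact h

lemma js_core (n : ℕ) (hn : 0 < n) (w G : ℕ → ℝ)
    (hJS : ∀ j ≤ n, 0 ≤ ∑ i ∈ range j, w i ∧ ∑ i ∈ range j, w i ≤ 1)
    (hw1 : ∑ i ∈ range n, w i = 1)
    (k : ℕ) (hk : k ≤ n)
    (hGdec : ∀ i j, i ≤ j → j < k → G j ≤ G i)
    (hGinc : ∀ i j, k ≤ i → i ≤ j → j < n → G i ≤ G j)
    (hG0a : ∀ i < k, 0 ≤ G i)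
    (hG0b : ∀ i, k ≤ i → i < n → 0 ≤ G i) :
    0 ≤ ∑ i ∈ range n, w i * G i := by
  have claimA : ∀ m, 0 < m → m ≤ k →
      (∑ i ∈ range m, w i) * G (m - 1) ≤ ∑ i ∈ range m, w i * G i := by
    intro m
    induction m with
    | zero => intro h; exact absurd h (lt_irrefl 0)
    | succ m ih =>
      intro _ hmk
      rcases Nat.eq_zero_or_pos m with hm0 | hm0
      · subst hm0; simp [Finset.sum_range_one]
      · have h1 := ih hm0 (le_trans (Nat.le_succ m) hmk)
        have hP : 0 ≤ ∑ i ∈ range m, w i := (hJS m (le_trans (le_trans (Nat.le_succ m) hmk) hk)).1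
        have hGm : G m ≤ G (m - 1) := hGdec (m-1) m (Nat.sub_le m 1) (lt_of_lt_of_le (Nat.lt_succ_self m) hmk)
        rw [Finset.sum_range_succ, Finset.sum_range_succ]
        have hmul : (∑ i ∈ range m, w i) * G m ≤ (∑ i ∈ range m, w i) * G (m-1) :=
          mul_le_mul_of_nonneg_left hGm hP
        have hms : m + 1 - 1 = m := rfl
        rw [hms]
        calc (∑ i ∈ range m, w i + w m) * G m
            = (∑ i ∈ range m, w i) * G m + w m * G m := by ring
          _ ≤ (∑ i ∈ range m, w i) * G (m-1) + w m * G m := by linarith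
          _ ≤ (∑ i ∈ range m, w i * G i) + w m * G m := by linarith
  have claimB : ∀ d m, m + d = n - 1 → k ≤ m →
      (1 - ∑ i ∈ range m, w i) * G m ≤ ∑ i ∈ Finset.Ico m n, w i * G i := by
    intro d
    induction d with
    | zero =>
      intro m hm _
      have hm' : m = n - 1 := by omega
      subst hm'
      have hIco : Finset.Ico (n-1) n = {n-1} := by
        rw [show n = (n-1)+1 by omega]; simp
      rw [hIco, Finset.sum_singleton]
      have hs : ∑ i ∈ range n, w i = ∑ i ∈ range (n-1), w i + w (n-1) := by
        rw [← Finset.sum_range_succ, show n - 1 + 1 = n by omega]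
      have hw : w (n-1) = 1 - ∑ i ∈ range (n-1), w i := by rw [← hw1]; linarith
      rw [hw]
    | succ d ih =>
      intro m hm hkm
      have hmn : m < n - 1 := by omega
      have h1 := ih (m+1) (by omega) (by omega)
      rw [Finset.sum_eq_sum_Ico_succ_bot (by omega : m < n)]
      have hP1 : 0 ≤ 1 - ∑ i ∈ range (m+1), w i := by
        have := (hJS (m+1) (by omega)).2; linarith
      have hGm : G m ≤ G (m+1) := hGinc m (m+1) hkm (Nat.le_succ m) (by omega)
      have hmul : (1 - ∑ i ∈ range (m+1), w i) * G m ≤ (1 - ∑ i ∈ range (m+1), w i) * G (m+1) :=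
        mul_le_mul_of_nonneg_left hGm hP1
      have hsucc : ∑ i ∈ range (m+1), w i = ∑ i ∈ range m, w i + w m := Finset.sum_range_succ w m
      calc (1 - ∑ i ∈ range m, w i) * G m
          = w m * G m + (1 - ∑ i ∈ range (m+1), w i) * G m := by rw [hsucc]; ring
        _ ≤ w m * G m + (1 - ∑ i ∈ range (m+1), w i) * G (m+1) := by linarith
        _ ≤ w m * G m + ∑ i ∈ Finset.Ico (m+1) n, w i * G i := by linarith
  rcases Nat.eq_zero_or_pos k with hk0 | hkpos
  · subst hk0
    have h := claimB (n - 1) 0 (by omega) (le_refl 0)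
    simp only [Finset.range_zero, Finset.sum_empty, sub_zero, one_mul] at h
    have h0 : 0 ≤ G 0 := hG0b 0 (le_refl 0) hn
    rw [← Finset.range_eq_Ico] at h
    linarith
  · rcases eq_or_lt_of_le hk with hkn | hkn
    · subst hkn
      have h := claimA k hn (le_refl k)
      rw [hw1, one_mul] at h
      have : 0 ≤ G (k-1) := hG0a (k-1) (by omega)
      linarith
    · have hA := claimA k hkpos (le_refl k)
      have hB := claimB (n - 1 - k) k (by omega) (le_refl k)
      have hsplit : ∑ i ∈ range k, w i * G i + ∑ i ∈ Finset.Ico k n, w i * G i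
          = ∑ i ∈ range n, w i * G i := Finset.sum_range_add_sum_Ico _ hk
      have hPk0 : 0 ≤ ∑ i ∈ range k, w i := (hJS k hk).1
      have hPk1 : ∑ i ∈ range k, w i ≤ 1 := (hJS k hk).2
      have hGk1 : 0 ≤ G (k-1) := hG0a (k-1) (by omega)
      have hGk : 0 ≤ G k := hG0b k (le_refl k) hkn
      nlinarith

lemma js_mean_bounds (n : ℕ) (hn : 0 < n) (w x : ℕ → ℝ)
    (hmono : ∀ i j, i ≤ j → j < n → x i ≤ x j)
    (hJS : ∀ j ≤ n, 0 ≤ ∑ i ∈ range j, w i ∧ ∑ i ∈ range j, w i ≤ 1)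
    (hw1 : ∑ i ∈ range n, w i = 1) :
    x 0 ≤ ∑ i ∈ range n, w i * x i ∧ ∑ i ∈ range n, w i * x i ≤ x (n - 1) := by
  constructor
  · have h := js_core n hn w (fun i => x i - x 0) hJS hw1 0 (Nat.zero_le n)
      (fun i j _ hj => absurd hj (Nat.not_lt_zero j))
      (fun i j _ hij hj => by simpa using hmono i j hij hj)
      (fun i hi => absurd hi (Nat.not_lt_zero i))
      (fun i _ hi => by simpa using hmono 0 i (Nat.zero_le i) hi)
    have hexp : ∑ i ∈ range n, w i * (x i - x 0)
        = ∑ i ∈ range n, w i * x i - x 0 := by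
      rw [Finset.sum_congr rfl (fun i _ => by ring : ∀ i ∈ range n, w i * (x i - x 0) = w i * x i - w i * x 0),
        Finset.sum_sub_distrib, ← Finset.sum_mul, hw1, one_mul]
    rw [hexp] at h; linarith
  · have h := js_core n hn w (fun i => x (n-1) - x i) hJS hw1 n (le_refl n)
      (fun i j hij hj => by show x (n-1) - x j ≤ x (n-1) - x i; linarith [hmono i j hij hj])
      (fun i j hi hij hj => absurd (lt_of_le_of_lt (le_trans hi hij) hj) (lt_irrefl n))
      (fun i hi => by show (0:ℝ) ≤ x (n-1) - x i; linarith [hmono i (n-1) (by omega) (by omega)])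
      (fun i hi hin => absurd (lt_of_le_of_lt hi hin) (lt_irrefl n))
    have hexp : ∑ i ∈ range n, w i * (x (n-1) - x i)
        = x (n-1) - ∑ i ∈ range n, w i * x i := by
      rw [Finset.sum_congr rfl (fun i _ => by ring : ∀ i ∈ range n, w i * (x (n-1) - x i) = w i * x (n-1) - w i * x i),
        Finset.sum_sub_distrib, ← Finset.sum_mul, hw1, one_mul]
    rw [hexp] at h; linarith

lemma refinedJS (a b : ℝ) (f f' Φ Φ' : ℝ → ℝ)
    (hf : ∀ x ∈ Set.Ico a b, HasDerivAt f (f' x) x)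
    (hΦ : ∀ t ∈ Set.Icc 0 (b - a), HasDerivAt Φ (Φ' t) t)
    (hΦ0 : Φ 0 = 0)
    (hsup : ∀ x y, a ≤ x → x ≤ y → y < b → Φ' (y - x) ≤ f' y - f' x)
    (n : ℕ) (hn : 0 < n) (w x : ℕ → ℝ)
    (hx : ∀ i < n, x i ∈ Set.Ico a b)
    (hmono : ∀ i j, i ≤ j → j < n → x i ≤ x j)
    (hw1 : ∑ i ∈ range n, w i = 1)
    (hJS : ∀ j ≤ n, 0 ≤ ∑ i ∈ range j, w i ∧ ∑ i ∈ range j, w i ≤ 1) :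
    ∑ i ∈ range n, w i * Φ |x i - ∑ j ∈ range n, w j * x j| ≤
      (∑ i ∈ range n, w i * f (x i)) - f (∑ i ∈ range n, w i * x i) := by
  classical
  set μ := ∑ j ∈ range n, w j * x j with hμdef
  have hμx : ∑ i ∈ range n, w i * x i = μ := rfl
  obtain ⟨hμ1, hμ2⟩ := js_mean_bounds n hn w x hmono hJS hw1
  have hμa : a ≤ μ := le_trans (hx 0 hn).1 hμ1
  have hμb : μ < b := lt_of_le_of_lt hμ2 (hx (n-1) (by omega)).2
  -- left monotone piece
  have hleft : ∀ s t, a ≤ s → s ≤ t → t ≤ μ →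
      f t - f μ - f' μ * (t - μ) - Φ (μ - t) ≤ f s - f μ - f' μ * (s - μ) - Φ (μ - s) := by
    intro s t hs hst htμ
    apply mono_of_deriv_nonpos (fun u => f u - f μ - f' μ * (u - μ) - Φ (μ - u))
      (fun u => f' u - f' μ + Φ' (μ - u)) s t hst
    · intro u hu
      have hu1 : a ≤ u := le_trans hs hu.1
      have hu2 : u < b := lt_of_le_of_lt (le_trans hu.2 htμ) hμb
      have hd1 : HasDerivAt f (f' u) u := hf u ⟨hu1, hu2⟩
      have hmem : μ - u ∈ Set.Icc 0 (b - a) := ⟨by linarith [hu.2], by linarith⟩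
      have hd2 : HasDerivAt (fun u => Φ (μ - u)) (-Φ' (μ - u)) u := by
        have h3 : HasDerivAt (fun u : ℝ => μ - u) (-1) u := by
          simpa using (hasDerivAt_id u).const_sub μ
        have := (hΦ (μ - u) hmem).comp u h3
        rw [mul_neg_one] at this
        exact this
      have := ((hd1.sub_const (f μ)).sub
        (((hasDerivAt_id u).sub_const μ).const_mul (f' μ))).sub hd2
      exact this.congr_deriv (by ring)
    · intro u hu
      have h := hsup u μ (le_trans hs hu.1) (le_trans hu.2 htμ) hμb
      show f' u - f' μ + Φ' (μ - u) ≤ 0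
      linarith
  -- right monotone piece
  have hright : ∀ s t, μ ≤ s → s ≤ t → t < b →
      f s - f μ - f' μ * (s - μ) - Φ (s - μ) ≤ f t - f μ - f' μ * (t - μ) - Φ (t - μ) := by
    intro s t hs hst htb
    apply mono_of_deriv_nonneg (fun u => f u - f μ - f' μ * (u - μ) - Φ (u - μ))
      (fun u => f' u - f' μ - Φ' (u - μ)) s t hst
    · intro u hu
      have hu1 : μ ≤ u := le_trans hs hu.1
      have hu2 : u < b := lt_of_le_of_lt hu.2 htb
      have hd1 : HasDerivAt f (f' u) u := hf u ⟨le_trans hμa hu1, hu2⟩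
      have hmem : u - μ ∈ Set.Icc 0 (b - a) := ⟨by linarith, by linarith⟩
      have hd2 : HasDerivAt (fun u => Φ (u - μ)) (Φ' (u - μ)) u := by
        have h3 : HasDerivAt (fun u : ℝ => u - μ) 1 u := (hasDerivAt_id u).sub_const μ
        have := (hΦ (u - μ) hmem).comp u h3
        rw [mul_one] at this
        exact this
      have := ((hd1.sub_const (f μ)).sub
        (((hasDerivAt_id u).sub_const μ).const_mul (f' μ))).sub hd2
      exact this.congr_deriv (by ring)
    · intro u hu
      have h := hsup μ u hμa (le_trans hs hu.1) (lt_of_le_of_lt hu.2 htb)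
      show 0 ≤ f' u - f' μ - Φ' (u - μ)
      linarith
  -- split index
  have hex : ∃ i, μ ≤ x i := ⟨n - 1, hμ2⟩
  set k := Nat.find hex with hkdef
  have hkn : k ≤ n - 1 := Nat.find_le hμ2
  have hkspec : μ ≤ x k := Nat.find_spec hex
  have hkmin : ∀ i < k, x i < μ := fun i hi => lt_of_not_ge (Nat.find_min hex hi)
  set G : ℕ → ℝ := fun i => f (x i) - f μ - f' μ * (x i - μ) - Φ |x i - μ| with hGdef
  have habs1 : ∀ i < n, x i ≤ μ → G i = f (x i) - f μ - f' μ * (x i - μ) - Φ (μ - x i) := by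
    intro i hi hle
    rw [hGdef]
    simp only []
    rw [abs_sub_comm, abs_of_nonneg (by linarith)]
  have habs2 : ∀ i < n, μ ≤ x i → G i = f (x i) - f μ - f' μ * (x i - μ) - Φ (x i - μ) := by
    intro i hi hle
    rw [hGdef]
    simp only []
    rw [abs_of_nonneg (by linarith)]
  have hFμ : f μ - f μ - f' μ * (μ - μ) - Φ (μ - μ) = 0 := by
    simp [hΦ0]
  have hcore := js_core n hn w G hJS hw1 k (by omega)
    (by -- hGdec
      intro i j hij hj
      have hjn : j < n := by omega
      have hin : i < n := by omega
      have hjμ : x j ≤ μ := le_of_lt (hkmin j hj)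
      have hiμ : x i ≤ μ := le_trans (hmono i j hij hjn) hjμ
      rw [habs1 i hin hiμ, habs1 j hjn hjμ]
      exact hleft (x i) (x j) (hx i hin).1 (hmono i j hij hjn) hjμ)
    (by -- hGinc
      intro i j hki hij hj
      have hin : i < n := by omega
      have hiμ : μ ≤ x i := le_trans hkspec (hmono k i hki hin)
      have hjμ : μ ≤ x j := le_trans hiμ (hmono i j hij hj)
      rw [habs2 i hin hiμ, habs2 j hj hjμ]
      exact hright (x i) (x j) hiμ (hmono i j hij hj) (hx j hj).2)
    (by -- hG0a
      intro i hi
      have hin : i < n := by omega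
      have hiμ : x i ≤ μ := le_of_lt (hkmin i hi)
      rw [habs1 i hin hiμ]
      have := hleft (x i) μ (hx i hin).1 hiμ (le_refl μ)
      linarith)
    (by -- hG0b
      intro i hki hin
      have hiμ : μ ≤ x i := le_trans hkspec (hmono k i hki hin)
      rw [habs2 i hin hiμ]
      have := hright μ (x i) (le_refl μ) hiμ (hx i hin).2
      linarith)
  -- expand the sum
  have hexp : ∑ i ∈ range n, w i * G i
      = (∑ i ∈ range n, w i * f (x i)) - f μ
        - ∑ i ∈ range n, w i * Φ |x i - μ| := by
    have e1 : ∀ i ∈ range n, w i * G i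
        = w i * f (x i) - w i * f μ - f' μ * (w i * x i) + (f' μ * μ) * w i
          - w i * Φ |x i - μ| := by
      intro i _
      rw [hGdef]
      ring
    have s2 : ∑ i ∈ range n, w i * f μ = f μ := by
      rw [← Finset.sum_mul, hw1, one_mul]
    have s3 : ∑ i ∈ range n, f' μ * (w i * x i) = f' μ * μ := by
      rw [← Finset.mul_sum, ← hμdef]
    have s4 : ∑ i ∈ range n, f' μ * μ * w i = f' μ * μ := by
      rw [← Finset.mul_sum, hw1, mul_one]
    rw [Finset.sum_congr rfl e1, Finset.sum_sub_distrib, Finset.sum_add_distrib,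
      Finset.sum_sub_distrib, Finset.sum_sub_distrib, s2, s3, s4]
    ring
  rw [hexp] at hcore
  linarith

lemma sum_if_insert (k : ℕ) (g : ℕ → ℝ) (v : ℝ) (n : ℕ) (hk : k ≤ n) :
    ∑ i ∈ range (n+1), (if i < k then g i else if i = k then v else g (i-1))
      = (∑ i ∈ range n, g i) + v := by
  rw [← Finset.sum_range_add_sum_Ico _ (by omega : k ≤ n + 1),
    Finset.sum_eq_sum_Ico_succ_bot (by omega : k < n + 1)]
  have h1 : ∀ i ∈ range k, (if i < k then g i else if i = k then v else g (i-1)) = g i := by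
    intro i hi
    rw [if_pos (mem_range.mp hi)]
  have h2 : (if k < k then g k else if k = k then v else g (k-1)) = v := by
    rw [if_neg (lt_irrefl k), if_pos rfl]
  have h3 : ∀ i ∈ Finset.Ico (k+1) (n+1),
      (if i < k then g i else if i = k then v else g (i-1)) = g (i-1) := by
    intro i hi
    have := Finset.mem_Ico.mp hi
    rw [if_neg (by omega), if_neg (by omega)]
  rw [Finset.sum_congr rfl h1, h2, Finset.sum_congr rfl h3]
  have h4 : ∑ i ∈ Finset.Ico (k+1) (n+1), g (i-1) = ∑ i ∈ Finset.Ico k n, g i := by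
    rw [Finset.sum_Ico_eq_sum_range, Finset.sum_Ico_eq_sum_range]
    have : n + 1 - (k + 1) = n - k := by omega
    rw [this]
    exact Finset.sum_congr rfl (fun i _ => by congr 1; omega)
  rw [h4, ← Finset.sum_range_add_sum_Ico g hk]
  ring

lemma jensen_compare (a b : ℝ) (f f' Φ Φ' : ℝ → ℝ)
    (hf : ∀ x ∈ Set.Ico a b, HasDerivAt f (f' x) x)
    (hΦ : ∀ t ∈ Set.Icc 0 (b - a), HasDerivAt Φ (Φ' t) t)
    (hΦ0 : Φ 0 = 0)
    (hsup : ∀ x y, a ≤ x → x ≤ y → y < b → Φ' (y - x) ≤ f' y - f' x)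
    (n : ℕ) (hn : 0 < n) (u v x : ℕ → ℝ) (c : ℝ) (hc0 : 0 ≤ c)
    (hx : ∀ i < n, x i ∈ Set.Ico a b)
    (hmono : ∀ i j, i ≤ j → j < n → x i ≤ x j)
    (hu1 : ∑ i ∈ range n, u i = 1) (hv1 : ∑ i ∈ range n, v i = 1)
    (huJS : ∀ j ≤ n, 0 ≤ ∑ i ∈ range j, u i ∧ ∑ i ∈ range j, u i ≤ 1)
    (hvJS : ∀ j ≤ n, 0 ≤ ∑ i ∈ range j, v i ∧ ∑ i ∈ range j, v i ≤ 1)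
    (hlow : ∀ j, 1 ≤ j → j ≤ n → c * ∑ i ∈ range j, v i ≤ ∑ i ∈ range j, u i)
    (htail : ∀ j ≤ n, c * (1 - ∑ i ∈ range j, v i) ≤ 1 - ∑ i ∈ range j, u i) :
    c * Φ |(∑ i ∈ range n, v i * x i) - ∑ i ∈ range n, u i * x i| +
      ∑ i ∈ range n, (u i - c * v i) * Φ |x i - ∑ j ∈ range n, u j * x j| ≤
      ((∑ i ∈ range n, u i * f (x i)) - f (∑ i ∈ range n, u i * x i)) -
        c * ((∑ i ∈ range n, v i * f (x i)) - f (∑ i ∈ range n, v i * x i)) := by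
  classical
  set μu := ∑ i ∈ range n, u i * x i with hμudef
  set μv := ∑ i ∈ range n, v i * x i with hμvdef
  obtain ⟨hv1', hv2'⟩ := js_mean_bounds n hn v x hmono hvJS hv1
  have hμva : a ≤ μv := le_trans (hx 0 hn).1 hv1'
  have hμvb : μv < b := lt_of_le_of_lt hv2' (hx (n-1) (by omega)).2
  -- insertion index
  have hex : ∃ i, μv ≤ x i := ⟨n - 1, hv2'⟩
  set k := Nat.find hex with hkdef
  have hkn : k ≤ n - 1 := Nat.find_le hv2'
  have hkn' : k ≤ n := by omega
  have hkspec : μv ≤ x k := Nat.find_spec hex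
  have hkmin : ∀ i < k, x i < μv := fun i hi => lt_of_not_ge (Nat.find_min hex hi)
  -- extended system
  set w : ℕ → ℝ := fun i => if i < k then u i - c * v i else if i = k then c
    else u (i-1) - c * v (i-1) with hwdef
  set y : ℕ → ℝ := fun i => if i < k then x i else if i = k then μv else x (i-1) with hydef
  -- combined summand identity
  have comb : ∀ (H : ℝ → ℝ) i, w i * H (y i) =
      (if i < k then (u i - c * v i) * H (x i) else if i = k then c * H μv
        else (u (i-1) - c * v (i-1)) * H (x (i-1))) := by
    intro H i
    simp only [hwdef, hydef]
    by_cases h1 : i < k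
    · simp only [if_pos h1]
    · by_cases h2 : i = k
      · simp only [if_neg h1, if_pos h2]
      · simp only [if_neg h1, if_neg h2]
  -- total weight
  have hwsum : ∑ i ∈ range (n+1), w i = 1 := by
    have e : ∀ i ∈ range (n+1), w i = (if i < k then u i - c * v i else if i = k then c
        else u (i-1) - c * v (i-1)) := fun i _ => by simp only [hwdef]
    rw [Finset.sum_congr rfl e, sum_if_insert k _ c n hkn']
    have : ∑ i ∈ range n, (u i - c * v i) = 1 - c := by
      rw [Finset.sum_sub_distrib, ← Finset.mul_sum, hu1, hv1, mul_one]
    rw [this]; ring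
  -- partial sums
  have hwpart : ∀ j ≤ n + 1, 0 ≤ ∑ i ∈ range j, w i ∧ ∑ i ∈ range j, w i ≤ 1 := by
    intro j hj
    by_cases hjk : j ≤ k
    · have heq : ∑ i ∈ range j, w i = ∑ i ∈ range j, (u i - c * v i) := by
        apply Finset.sum_congr rfl
        intro i hi
        simp only [hwdef]
        rw [if_pos (by have := mem_range.mp hi; omega : i < k)]
      have hsub : ∑ i ∈ range j, (u i - c * v i)
          = (∑ i ∈ range j, u i) - c * ∑ i ∈ range j, v i := by
        rw [Finset.sum_sub_distrib, ← Finset.mul_sum]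
      have hjn : j ≤ n := by omega
      constructor
      · rw [heq, hsub]
        rcases Nat.eq_zero_or_pos j with h0 | h0
        · subst h0; simp
        · linarith [hlow j h0 hjn]
      · rw [heq, hsub]
        have := (huJS j hjn).2
        have := (hvJS j hjn).1
        nlinarith
    · push_neg at hjk
      have hj1 : j - 1 ≤ n := by omega
      have hkj1 : k ≤ j - 1 := by omega
      have heq : ∑ i ∈ range j, w i = (∑ i ∈ range (j-1), (u i - c * v i)) + c := by
        have e : ∀ i ∈ range j, w i = (if i < k then u i - c * v i else if i = k then c
            else u (i-1) - c * v (i-1)) := fun i _ => by simp only [hwdef]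
        rw [Finset.sum_congr rfl e, show j = (j-1)+1 by omega]
        exact sum_if_insert k _ c (j-1) hkj1
      have hsub : ∑ i ∈ range (j-1), (u i - c * v i)
          = (∑ i ∈ range (j-1), u i) - c * ∑ i ∈ range (j-1), v i := by
        rw [Finset.sum_sub_distrib, ← Finset.mul_sum]
      rw [heq, hsub]
      constructor
      · rcases Nat.eq_zero_or_pos (j-1) with h0 | h0
        · rw [h0]; simp [hc0]
        · linarith [hlow (j-1) h0 hj1]
      · linarith [htail (j-1) hj1, (huJS (j-1) hj1).2]
  -- monotonicity and membership of y
  have hymono : ∀ i j, i ≤ j → j < n + 1 → y i ≤ y j := by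
    intro i j hij hj
    simp only [hydef]
    by_cases h1 : i < k
    · by_cases h2 : j < k
      · simp only [if_pos h1, if_pos h2]
        exact hmono i j hij (by omega)
      · by_cases h3 : j = k
        · simp only [if_pos h1, if_neg h2, if_pos h3]
          exact le_of_lt (hkmin i h1)
        · simp only [if_pos h1, if_neg h2, if_neg h3]
          have hk1 : k ≤ j - 1 := by omega
          calc x i ≤ μv := le_of_lt (hkmin i h1)
            _ ≤ x k := hkspec
            _ ≤ x (j-1) := hmono k (j-1) hk1 (by omega)
    · by_cases h2 : i = k
      · by_cases h3 : j = k
        · simp only [if_neg h1, if_pos h2, if_neg (by omega : ¬ j < k), if_pos h3]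
          exact le_refl μv
        · have h4 : ¬ j < k := by omega
          simp only [if_neg h1, if_pos h2, if_neg h4, if_neg h3]
          calc μv ≤ x k := hkspec
            _ ≤ x (j-1) := hmono k (j-1) (by omega) (by omega)
      · have h4 : ¬ j < k := by omega
        have h5 : ¬ j = k := by omega
        simp only [if_neg h1, if_neg h2, if_neg h4, if_neg h5]
        exact hmono (i-1) (j-1) (by omega) (by omega)
  have hymem : ∀ i < n + 1, y i ∈ Set.Ico a b := by
    intro i hi
    simp only [hydef]
    by_cases h1 : i < k
    · simp only [if_pos h1]; exact hx i (by omega)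
    · by_cases h2 : i = k
      · simp only [if_neg h1, if_pos h2]; exact ⟨hμva, hμvb⟩
      · simp only [if_neg h1, if_neg h2]; exact hx (i-1) (by omega)
  -- extended mean is μu
  have hymean : ∑ i ∈ range (n+1), w i * y i = μu := by
    have e : ∀ i ∈ range (n+1), w i * y i =
        (if i < k then (u i - c * v i) * x i else if i = k then c * μv
          else (u (i-1) - c * v (i-1)) * x (i-1)) := fun i _ => comb id i
    rw [Finset.sum_congr rfl e, sum_if_insert k _ _ n hkn']
    have : ∑ i ∈ range n, (u i - c * v i) * x i = μu - c * μv := by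
      rw [hμudef, hμvdef, Finset.mul_sum, ← Finset.sum_sub_distrib]
      exact Finset.sum_congr rfl (fun i _ => by ring)
    rw [this]; ring
  -- apply refined JS
  have hres := refinedJS a b f f' Φ Φ' hf hΦ hΦ0 hsup (n+1) (by omega) w y
    hymem hymono hwsum hwpart
  rw [show ∑ j ∈ range (n+1), w j * y j = μu from hymean] at hres
  -- expand the two sums in hres
  have hfy : ∑ i ∈ range (n+1), w i * f (y i)
      = (∑ i ∈ range n, (u i - c * v i) * f (x i)) + c * f μv := by
    have e : ∀ i ∈ range (n+1), w i * f (y i) =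
        (if i < k then (u i - c * v i) * f (x i) else if i = k then c * f μv
          else (u (i-1) - c * v (i-1)) * f (x (i-1))) := fun i _ => comb f i
    rw [Finset.sum_congr rfl e, sum_if_insert k _ _ n hkn']
  have hΦy : ∑ i ∈ range (n+1), w i * Φ |y i - μu|
      = (∑ i ∈ range n, (u i - c * v i) * Φ |x i - μu|) + c * Φ |μv - μu| := by
    have e : ∀ i ∈ range (n+1), w i * Φ |y i - μu| =
        (if i < k then (u i - c * v i) * Φ |x i - μu| else if i = k then c * Φ |μv - μu|
          else (u (i-1) - c * v (i-1)) * Φ |x (i-1) - μu|) :=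
      fun i _ => comb (fun t => Φ |t - μu|) i
    rw [Finset.sum_congr rfl e, sum_if_insert k _ _ n hkn']
  rw [hfy, hΦy] at hres
  have hufx : ∑ i ∈ range n, (u i - c * v i) * f (x i)
      = (∑ i ∈ range n, u i * f (x i)) - c * ∑ i ∈ range n, v i * f (x i) := by
    rw [Finset.mul_sum, ← Finset.sum_sub_distrib]
    exact Finset.sum_congr rfl (fun i _ => by ring)
  rw [hufx] at hres
  linarith

/-- comparison of Jensen functionals for functions with
Φ'-superadditive derivative (uniformly convex type). -/
theorem stmt19 (a b : ℝ) (hab : a < b) (f f' Φ Φ' : ℝ → ℝ)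
    (hf : ∀ x ∈ Set.Ico a b, HasDerivAt f (f' x) x)
    (hf'c : ContinuousOn f' (Set.Ico a b))
    (hΦ : ∀ t ∈ Set.Icc 0 (b - a), HasDerivAt Φ (Φ' t) t)
    (hΦ'c : ContinuousOn Φ' (Set.Icc 0 (b - a)))
    (hΦnn : ∀ t ∈ Set.Icc 0 (b - a), 0 ≤ Φ t)
    (hΦ'nn : ∀ t ∈ Set.Icc 0 (b - a), 0 ≤ Φ' t)
    (hΦ0 : Φ 0 = 0)
    (hsup : ∀ x y, a ≤ x → x ≤ y → y < b → Φ' (y - x) ≤ f' y - f' x)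
    (n : ℕ) (hn : 0 < n) (p q x : ℕ → ℝ)
    (hx : ∀ i < n, x i ∈ Set.Ico a b)
    (hmono : ∀ i j, i ≤ j → j < n → x i ≤ x j)
    (hp1 : ∑ i ∈ Finset.range n, p i = 1)
    (hq1 : ∑ i ∈ Finset.range n, q i = 1)
    (hpJS : ∀ j ≤ n, 0 ≤ ∑ i ∈ Finset.range j, p i ∧ ∑ i ∈ Finset.range j, p i ≤ 1)
    (hqJS : ∀ j, 1 ≤ j → j < n →
      0 < ∑ i ∈ Finset.range j, q i ∧ ∑ i ∈ Finset.range j, q i < 1)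
    (hpq : ∃ i < n, p i ≠ q i)
    (mstar Mstar : ℝ)
    (hm : IsLeast {r : ℝ | ∃ i, 1 ≤ i ∧ i ≤ n ∧
      (r = (∑ j ∈ Finset.range i, p j) / (∑ j ∈ Finset.range i, q j) ∨
        r = (∑ j ∈ Finset.Ico (i - 1) n, p j) / (∑ j ∈ Finset.Ico (i - 1) n, q j))} mstar)
    (hM : IsGreatest {r : ℝ | ∃ i, 1 ≤ i ∧ i ≤ n ∧
      (r = (∑ j ∈ Finset.range i, p j) / (∑ j ∈ Finset.range i, q j) ∨
        r = (∑ j ∈ Finset.Ico (i - 1) n, p j) / (∑ j ∈ Finset.Ico (i - 1) n, q j))} Mstar) :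
    (mstar * Φ |∑ i ∈ Finset.range n, (q i - p i) * x i| +
        ∑ i ∈ Finset.range n, (p i - mstar * q i) *
          Φ |x i - ∑ j ∈ Finset.range n, p j * x j| ≤
      ((∑ i ∈ Finset.range n, p i * f (x i)) - f (∑ i ∈ Finset.range n, p i * x i)) -
        mstar * ((∑ i ∈ Finset.range n, q i * f (x i)) -
          f (∑ i ∈ Finset.range n, q i * x i))) ∧
    (((∑ i ∈ Finset.range n, p i * f (x i)) - f (∑ i ∈ Finset.range n, p i * x i)) -
        Mstar * ((∑ i ∈ Finset.range n, q i * f (x i)) -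
          f (∑ i ∈ Finset.range n, q i * x i)) ≤
      -(∑ i ∈ Finset.range n, (Mstar * q i - p i) *
          Φ |x i - ∑ j ∈ Finset.range n, q j * x j|) -
        Φ |∑ i ∈ Finset.range n, (p i - q i) * x i|) := by
  classical
  -- basic facts
  have hqJS' : ∀ j ≤ n, 0 ≤ ∑ i ∈ range j, q i ∧ ∑ i ∈ range j, q i ≤ 1 := by
    intro j hj
    rcases Nat.eq_zero_or_pos j with h0 | h0
    · subst h0; simp
    · rcases eq_or_lt_of_le hj with hjn | hjn
      · subst hjn; rw [hq1]; exact ⟨zero_le_one, le_refl 1⟩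
      · have := hqJS j h0 hjn
        exact ⟨le_of_lt this.1, le_of_lt this.2⟩
  have hone : (1:ℝ) ∈ {r : ℝ | ∃ i, 1 ≤ i ∧ i ≤ n ∧
      (r = (∑ j ∈ Finset.range i, p j) / (∑ j ∈ Finset.range i, q j) ∨
        r = (∑ j ∈ Finset.Ico (i - 1) n, p j) / (∑ j ∈ Finset.Ico (i - 1) n, q j))} :=
    ⟨n, hn, le_refl n, Or.inl (by rw [hp1, hq1]; norm_num)⟩
  have hm1 : mstar ≤ 1 := hm.2 hone
  have hM1 : 1 ≤ Mstar := hM.2 hone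
  have hMpos : 0 < Mstar := lt_of_lt_of_le one_pos hM1
  have hMne : Mstar ≠ 0 := ne_of_gt hMpos
  have htailp : ∀ j ≤ n, ∑ i ∈ Finset.Ico j n, p i = 1 - ∑ i ∈ range j, p i := by
    intro j hj
    have := Finset.sum_range_add_sum_Ico p hj
    rw [hp1] at this; linarith
  have htailq : ∀ j ≤ n, ∑ i ∈ Finset.Ico j n, q i = 1 - ∑ i ∈ range j, q i := by
    intro j hj
    have := Finset.sum_range_add_sum_Ico q hj
    rw [hq1] at this; linarith
  have hm0 : 0 ≤ mstar := by
    obtain ⟨i, hi1, hin, hcase⟩ := hm.1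
    rcases hcase with hc | hc
    · rw [hc]
      exact div_nonneg (hpJS i hin).1 (hqJS' i hin).1
    · rw [hc, htailp (i-1) (by omega), htailq (i-1) (by omega)]
      exact div_nonneg (by linarith [(hpJS (i-1) (by omega)).2])
        (by linarith [(hqJS' (i-1) (by omega)).2])
  have hQpos : ∀ j, 1 ≤ j → j ≤ n → 0 < ∑ i ∈ range j, q i := by
    intro j hj1 hjn
    rcases eq_or_lt_of_le hjn with h | h
    · subst h; rw [hq1]; exact one_pos
    · exact (hqJS j hj1 h).1
  have hQtail : ∀ j, j < n → 0 < 1 - ∑ i ∈ range j, q i := by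
    intro j hj
    rcases Nat.eq_zero_or_pos j with h0 | h0
    · subst h0; simp
    · linarith [(hqJS j h0 hj).2]
  have hratio_mem : ∀ j, 1 ≤ j → j ≤ n →
      (∑ i ∈ range j, p i) / (∑ i ∈ range j, q i) ∈ {r : ℝ | ∃ i, 1 ≤ i ∧ i ≤ n ∧
      (r = (∑ j ∈ Finset.range i, p j) / (∑ j ∈ Finset.range i, q j) ∨
        r = (∑ j ∈ Finset.Ico (i - 1) n, p j) / (∑ j ∈ Finset.Ico (i - 1) n, q j))} :=
    fun j hj1 hjn => ⟨j, hj1, hjn, Or.inl rfl⟩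
  have htail_mem : ∀ j, j < n →
      (1 - ∑ i ∈ range j, p i) / (1 - ∑ i ∈ range j, q i) ∈ {r : ℝ | ∃ i, 1 ≤ i ∧ i ≤ n ∧
      (r = (∑ j ∈ Finset.range i, p j) / (∑ j ∈ Finset.range i, q j) ∨
        r = (∑ j ∈ Finset.Ico (i - 1) n, p j) / (∑ j ∈ Finset.Ico (i - 1) n, q j))} := by
    intro j hj
    refine ⟨j + 1, by omega, by omega, Or.inr ?_⟩
    rw [show j + 1 - 1 = j from rfl, htailp j (by omega), htailq j (by omega)]
  -- facts for mstar
  have hmlow : ∀ j, 1 ≤ j → j ≤ n → mstar * ∑ i ∈ range j, q i ≤ ∑ i ∈ range j, p i := by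
    intro j hj1 hjn
    exact (le_div_iff₀ (hQpos j hj1 hjn)).mp (hm.2 (hratio_mem j hj1 hjn))
  have hmtail : ∀ j ≤ n, mstar * (1 - ∑ i ∈ range j, q i) ≤ 1 - ∑ i ∈ range j, p i := by
    intro j hjn
    rcases eq_or_lt_of_le hjn with h | h
    · subst h; rw [hp1, hq1]; simp
    · exact (le_div_iff₀ (hQtail j h)).mp (hm.2 (htail_mem j h))
  -- facts for Mstar
  have hMlow : ∀ j, 1 ≤ j → j ≤ n →
      (1/Mstar) * ∑ i ∈ range j, p i ≤ ∑ i ∈ range j, q i := by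
    intro j hj1 hjn
    have h := (div_le_iff₀ (hQpos j hj1 hjn)).mp (hM.2 (hratio_mem j hj1 hjn))
    rw [one_div, inv_mul_le_iff₀ hMpos]
    linarith [h]
  have hMtail : ∀ j ≤ n, (1/Mstar) * (1 - ∑ i ∈ range j, p i) ≤ 1 - ∑ i ∈ range j, q i := by
    intro j hjn
    rcases eq_or_lt_of_le hjn with h | h
    · subst h; rw [hp1, hq1]; simp
    · have h2 := (div_le_iff₀ (hQtail j h)).mp (hM.2 (htail_mem j h))
      rw [one_div, inv_mul_le_iff₀ hMpos]
      linarith [h2]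
  -- difference of means
  have hdiff1 : ∑ i ∈ range n, (q i - p i) * x i
      = (∑ i ∈ range n, q i * x i) - ∑ i ∈ range n, p i * x i := by
    rw [← Finset.sum_sub_distrib]
    exact Finset.sum_congr rfl (fun i _ => by ring)
  have hdiff2 : ∑ i ∈ range n, (p i - q i) * x i
      = (∑ i ∈ range n, p i * x i) - ∑ i ∈ range n, q i * x i := by
    rw [← Finset.sum_sub_distrib]
    exact Finset.sum_congr rfl (fun i _ => by ring)
  constructor
  · -- part 1
    have part1 := jensen_compare a b f f' Φ Φ' hf hΦ hΦ0 hsup n hn p q x mstar hm0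
      hx hmono hp1 hq1 hpJS hqJS' hmlow hmtail
    rw [hdiff1]
    exact part1
  · -- part 2
    have part2 := jensen_compare a b f f' Φ Φ' hf hΦ hΦ0 hsup n hn q p x (1/Mstar)
      (by positivity) hx hmono hq1 hp1 hqJS' hpJS hMlow hMtail
    rw [hdiff2]
    have hAB : ∑ i ∈ range n, (Mstar * q i - p i) * Φ |x i - ∑ j ∈ range n, q j * x j|
        = Mstar * ∑ i ∈ range n, (q i - (1/Mstar) * p i) *
            Φ |x i - ∑ j ∈ range n, q j * x j| := by
      rw [Finset.mul_sum]
      refine Finset.sum_congr rfl (fun i _ => ?_)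
      rw [← mul_assoc]
      congr 1
      field_simp
    rw [hAB]
    set z := Φ |(∑ i ∈ range n, p i * x i) - ∑ i ∈ range n, q i * x i| with hzdef
    set A := ∑ i ∈ range n, (q i - (1/Mstar) * p i) *
      Φ |x i - ∑ j ∈ range n, q j * x j| with hAdef
    set S1 := ∑ i ∈ range n, p i * f (x i) with hS1def
    set S2 := ∑ i ∈ range n, q i * f (x i) with hS2def
    set F1 := f (∑ i ∈ range n, p i * x i) with hF1def
    set F2 := f (∑ i ∈ range n, q i * x i) with hF2def
    -- part2 : 1/M * z + A ≤ (S2 - F2) - 1/M * (S1 - F1)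
    have h := mul_le_mul_of_nonneg_left part2 hMpos.le
    have e1 : Mstar * (1/Mstar * z + A) = z + Mstar * A := by
      field_simp
    have e2 : Mstar * (S2 - F2 - 1/Mstar * (S1 - F1)) = Mstar * (S2 - F2) - (S1 - F1) := by
      field_simp
    rw [e1, e2] at h
    linarith
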